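/- arXiv:2407.15580 — 2 statements merged into one kernel-verified Lean document; each statement's English description precedes it below -/
import Mathlib

section
/- Let (𝒴, Σ, μ) be a finite measure space, n ≥ 1, and ℓ_1, …, ℓ_n : 𝒴 → ℝ measurable and bounded. Then the function T ↦ ∫ Σ_{k=1}^n q_T(y)(k) ℓ_k(y) dμ(y), where q_T(y) is the Boltzmann distribution of (ℓ_1(y), …, ℓ_n(y)) at temperature T, is non-decreasing on (0, ∞). -/
open Real Finset MeasureTheory

lemma boltz_key (n : ℕ) (a : Fin n → ℝ) {β γ : ℝ} (h : β ≤ γ) :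
    (∑ k, a k * Real.exp (-(γ * a k))) * (∑ s, Real.exp (-(β * a s))) ≤
    (∑ k, a k * Real.exp (-(β * a k))) * (∑ s, Real.exp (-(γ * a s))) := by
  set E : Fin n → ℝ := fun k => Real.exp (-(β * a k)) with hE
  set G : Fin n → ℝ := fun k => Real.exp (-(γ * a k)) with hG
  have h0 : 0 ≤ ∑ k, ∑ s, (a k - a s) * (E k * G s - E s * G k) := by
    apply Finset.sum_nonneg; intro k _; apply Finset.sum_nonneg; intro s _
    have hEG : ∀ i j : Fin n, E i * G j = Real.exp (-(β * a i) + -(γ * a j)) := by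
      intro i j; rw [hE, hG, ← Real.exp_add]
    rcases le_total (a k) (a s) with hks | hks
    · have h2 : E k * G s - E s * G k ≤ 0 := by
        rw [sub_nonpos, hEG, hEG]
        exact Real.exp_le_exp.mpr (by nlinarith)
      nlinarith
    · apply mul_nonneg (by linarith)
      rw [sub_nonneg, hEG, hEG]
      exact Real.exp_le_exp.mpr (by nlinarith)
  have hexp : ∑ k, ∑ s, (a k - a s) * (E k * G s - E s * G k)
      = 2 * ((∑ k, a k * E k) * (∑ s, G s) - (∑ k, a k * G k) * (∑ s, E s)) := by
    simp only [sub_mul, mul_sub, Finset.sum_sub_distrib, ← Finset.sum_mul, ← Finset.mul_sum]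
    have t1 : ∑ x : Fin n, a x * (E x * ∑ i, G i) = (∑ k, a k * E k) * ∑ i, G i := by
      rw [Finset.sum_mul]; exact Finset.sum_congr rfl fun _ _ => by ring
    have t2 : ∑ x : Fin n, ∑ x1 : Fin n, a x1 * (E x * G x1)
        = (∑ i, E i) * (∑ k, a k * G k) := by
      rw [Finset.sum_mul_sum]
      exact Finset.sum_congr rfl fun _ _ => Finset.sum_congr rfl fun _ _ => by ring
    have t3 : ∑ x : Fin n, a x * ((∑ i, E i) * G x) = (∑ k, a k * G k) * ∑ i, E i := by
      rw [Finset.sum_mul]; exact Finset.sum_congr rfl fun _ _ => by ring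
    have t4 : ∑ x : Fin n, ∑ x1 : Fin n, a x1 * (E x1 * G x)
        = (∑ k, a k * E k) * ∑ i, G i := by
      rw [Finset.sum_mul_sum, Finset.sum_comm]
      exact Finset.sum_congr rfl fun _ _ => Finset.sum_congr rfl fun _ _ => by ring
    rw [t1, t2, t3, t4]; ring
  rw [hexp] at h0
  linarith

lemma boltz_pt (n : ℕ) (hn : 1 ≤ n) (a : Fin n → ℝ) {T1 T2 : ℝ}
    (h1 : 0 < T1) (h12 : T1 ≤ T2) :
    ∑ k, (Real.exp (-a k / T1) / ∑ s, Real.exp (-a s / T1)) * a k ≤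
    ∑ k, (Real.exp (-a k / T2) / ∑ s, Real.exp (-a s / T2)) * a k := by
  have h2 : 0 < T2 := h1.trans_le h12
  have : Nonempty (Fin n) := Fin.pos_iff_nonempty.mp hn
  have hne : (Finset.univ : Finset (Fin n)).Nonempty := Finset.univ_nonempty
  have harg : ∀ (T : ℝ) (k : Fin n), -a k / T = -(T⁻¹ * a k) := fun T k => by ring
  simp only [harg]
  have hβγ : T2⁻¹ ≤ T1⁻¹ := inv_anti₀ h1 h12
  have key := boltz_key n a hβγ
  have hP : 0 < ∑ s, Real.exp (-(T1⁻¹ * a s)) :=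
    Finset.sum_pos (fun _ _ => Real.exp_pos _) hne
  have hQ : 0 < ∑ s, Real.exp (-(T2⁻¹ * a s)) :=
    Finset.sum_pos (fun _ _ => Real.exp_pos _) hne
  have e1 : ∑ k, (Real.exp (-(T1⁻¹ * a k)) / ∑ s, Real.exp (-(T1⁻¹ * a s))) * a k
      = (∑ k, a k * Real.exp (-(T1⁻¹ * a k))) / ∑ s, Real.exp (-(T1⁻¹ * a s)) := by
    rw [Finset.sum_div]; exact Finset.sum_congr rfl fun _ _ => by ring
  have e2 : ∑ k, (Real.exp (-(T2⁻¹ * a k)) / ∑ s, Real.exp (-(T2⁻¹ * a s))) * a k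
      = (∑ k, a k * Real.exp (-(T2⁻¹ * a k))) / ∑ s, Real.exp (-(T2⁻¹ * a s)) := by
    rw [Finset.sum_div]; exact Finset.sum_congr rfl fun _ _ => by ring
  rw [e1, e2, div_le_div_iff₀ hP hQ]
  exact key

/-- **The soft distortion under the Boltzmann assignment is non-decreasing in the
temperature.** On a finite measure space, for measurable bounded losses
`ℓ₁, …, ℓₙ`, the map `T ↦ ∫ ∑ k, q_T(y)(k) ℓ k y dμ(y)` is non-decreasing on
`(0, ∞)`, where `q_T(y)` is the Boltzmann distribution of `(ℓ k y)_k`. -/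
theorem soft_distortion_monotone_in_temperature
    {Y : Type*} [MeasurableSpace Y] (μ : Measure Y) [IsFiniteMeasure μ]
    (n : ℕ) (hn : 1 ≤ n)
    (ℓ : Fin n → Y → ℝ) (hℓmeas : ∀ k, Measurable (ℓ k))
    (hℓbdd : ∀ k, ∃ C, ∀ y, |ℓ k y| ≤ C) :
    MonotoneOn
      (fun T : ℝ =>
        ∫ y, ∑ k, (Real.exp (-ℓ k y / T) / ∑ s, Real.exp (-ℓ s y / T)) * ℓ k y ∂μ)
      (Set.Ioi 0) := by
  have : Nonempty (Fin n) := Fin.pos_iff_nonempty.mp hn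
  have hne : (Finset.univ : Finset (Fin n)).Nonempty := Finset.univ_nonempty
  choose C hC using hℓbdd
  have hint : ∀ T : ℝ, Integrable
      (fun y => ∑ k, (Real.exp (-ℓ k y / T) / ∑ s, Real.exp (-ℓ s y / T)) * ℓ k y) μ := by
    intro T
    have hmeas : Measurable
        (fun y => ∑ k, (Real.exp (-ℓ k y / T) / ∑ s, Real.exp (-ℓ s y / T)) * ℓ k y) := by
      apply Finset.measurable_sum
      intro k _
      exact (((Real.measurable_exp.comp ((hℓmeas k).neg.div_const T)).div
        (Finset.measurable_sum _ (fun s _ =>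
          Real.measurable_exp.comp ((hℓmeas s).neg.div_const T)))).mul (hℓmeas k))
    refine ⟨hmeas.aestronglyMeasurable, ?_⟩
    apply MeasureTheory.HasFiniteIntegral.of_bounded (C := ∑ k, C k)
    filter_upwards with y
    calc ‖∑ k, (Real.exp (-ℓ k y / T) / ∑ s, Real.exp (-ℓ s y / T)) * ℓ k y‖
        ≤ ∑ k, ‖(Real.exp (-ℓ k y / T) / ∑ s, Real.exp (-ℓ s y / T)) * ℓ k y‖ :=
          norm_sum_le _ _
      _ ≤ ∑ k, C k := by
          apply Finset.sum_le_sum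
          intro k _
          have hP : 0 < ∑ s, Real.exp (-ℓ s y / T) :=
            Finset.sum_pos (fun _ _ => Real.exp_pos _) hne
          have hq1 : Real.exp (-ℓ k y / T) / ∑ s, Real.exp (-ℓ s y / T) ≤ 1 := by
            rw [div_le_one hP]
            exact Finset.single_le_sum (f := fun s => Real.exp (-ℓ s y / T)) (fun s _ => (Real.exp_pos _).le) (Finset.mem_univ k)
          have hq0 : 0 ≤ Real.exp (-ℓ k y / T) / ∑ s, Real.exp (-ℓ s y / T) :=
            div_nonneg (Real.exp_pos _).le hP.le
          rw [norm_mul, Real.norm_eq_abs, Real.norm_eq_abs, abs_of_nonneg hq0]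
          calc (Real.exp (-ℓ k y / T) / ∑ s, Real.exp (-ℓ s y / T)) * |ℓ k y|
              ≤ 1 * |ℓ k y| := by
                apply mul_le_mul_of_nonneg_right hq1 (abs_nonneg _)
            _ = |ℓ k y| := one_mul _
            _ ≤ C k := hC k y
  intro T1 hT1 T2 hT2 h12
  exact integral_mono (hint T1) (hint T2)
    (fun y => boltz_pt n hn (fun k => ℓ k y) hT1 h12)
end

section
/- Let μ be a finite measure on ℝ^d with ∫ ‖y‖² dμ(y) < ∞, and let n ≥ 1. For T > 0 define D*(T) = inf over tuples (z_1, …, z_n) ∈ (ℝ^d)^n of ∫ Σ_{k=1}^n q_T(y)(k) ‖z_k − y‖² dμ(y), where q_T(y) is the Boltzmann distribution of the loss vector (‖z_1 − y‖², …, ‖z_n − y‖²) at temperature T. Then D* is a non-decreasing function of T on (0, ∞). -/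
open Real Finset MeasureTheory


lemma double_sum_prod {n : ℕ} (f g : Fin n → ℝ) :
    ∑ k, ∑ s, f k * g s = (∑ k, f k) * (∑ s, g s) := by
  rw [Finset.sum_mul_sum]

lemma key_ineq {n : ℕ} (ℓ : Fin n → ℝ) {T₁ T₂ : ℝ} (h1 : 0 < T₁) (h12 : T₁ ≤ T₂) :
    (∑ k, Real.exp (-ℓ k / T₁) * ℓ k) * (∑ s, Real.exp (-ℓ s / T₂)) ≤
    (∑ k, Real.exp (-ℓ k / T₂) * ℓ k) * (∑ s, Real.exp (-ℓ s / T₁)) := by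
  have h2 : 0 < T₂ := h1.trans_le h12
  set A : Fin n → ℝ := fun k => Real.exp (-ℓ k / T₂) with hA
  set B : Fin n → ℝ := fun k => Real.exp (-ℓ k / T₁) with hB
  have hexp : ∀ k s, ℓ s ≤ ℓ k → B k * A s ≤ A k * B s := by
    intro k s h
    rw [hA, hB]
    rw [← Real.exp_add, ← Real.exp_add]
    apply Real.exp_le_exp.2
    rw [div_add_div _ _ h1.ne' h2.ne', div_add_div _ _ h2.ne' h1.ne',
      div_le_div_iff₀ (by positivity) (by positivity)]
    nlinarith [mul_nonneg (sub_nonneg.2 h) (sub_nonneg.2 h12), mul_pos h1 h2]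
  have hnn : 0 ≤ ∑ k, ∑ s, (ℓ k - ℓ s) * (A k * B s - B k * A s) := by
    refine Finset.sum_nonneg fun k _ => Finset.sum_nonneg fun s _ => ?_
    rcases le_total (ℓ s) (ℓ k) with h | h
    · exact mul_nonneg (by linarith) (sub_nonneg.2 (hexp k s h))
    · exact mul_nonneg_iff.2 (Or.inr ⟨by linarith,
        by have := hexp s k h; nlinarith [mul_comm (A k) (B s), mul_comm (B k) (A s)]⟩)
  have swap1 : ∑ k, ∑ s, ℓ s * (A k * B s) = ∑ k, ∑ s, ℓ k * (A s * B k) :=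
    Finset.sum_comm
  have swap2 : ∑ k, ∑ s, ℓ s * (B k * A s) = ∑ k, ∑ s, ℓ k * (B s * A k) :=
    Finset.sum_comm
  have expand : ∑ k, ∑ s, (ℓ k - ℓ s) * (A k * B s - B k * A s)
      = 2 * ((∑ k, ℓ k * A k) * (∑ s, B s) - (∑ k, ℓ k * B k) * (∑ s, A s)) := by
    have e1 : ∑ k, ∑ s, (ℓ k - ℓ s) * (A k * B s - B k * A s)
        = (∑ k, ∑ s, ℓ k * (A k * B s)) - (∑ k, ∑ s, ℓ k * (B k * A s))
          - (∑ k, ∑ s, ℓ s * (A k * B s)) + (∑ k, ∑ s, ℓ s * (B k * A s)) := by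
      simp only [← Finset.sum_sub_distrib, ← Finset.sum_add_distrib]
      congr 1; ext k; congr 1; ext s; ring
    rw [e1, swap1, swap2]
    have p1 : ∑ k, ∑ s, ℓ k * (A k * B s) = (∑ k, ℓ k * A k) * (∑ s, B s) := by
      rw [← double_sum_prod]; congr 1; ext k; congr 1; ext s; ring
    have p2 : ∑ k, ∑ s, ℓ k * (B k * A s) = (∑ k, ℓ k * B k) * (∑ s, A s) := by
      rw [← double_sum_prod]; congr 1; ext k; congr 1; ext s; ring
    have p3 : ∑ k, ∑ s, ℓ k * (A s * B k) = (∑ k, ℓ k * B k) * (∑ s, A s) := by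
      rw [← double_sum_prod (fun k => ℓ k * B k) A]; congr 1; ext k; congr 1; ext s; ring
    have p4 : ∑ k, ∑ s, ℓ k * (B s * A k) = (∑ k, ℓ k * A k) * (∑ s, B s) := by
      rw [← double_sum_prod (fun k => ℓ k * A k) B]; congr 1; ext k; congr 1; ext s; ring
    rw [p1, p2, p3, p4]; ring
  rw [expand] at hnn
  have c2 : ∑ k, A k * ℓ k = ∑ k, ℓ k * A k := Finset.sum_congr rfl fun k _ => mul_comm _ _
  have c3 : ∑ k, B k * ℓ k = ∑ k, ℓ k * B k := Finset.sum_congr rfl fun k _ => mul_comm _ _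
  show (∑ k, B k * ℓ k) * (∑ s, A s) ≤ (∑ k, A k * ℓ k) * (∑ s, B s)
  rw [c2, c3]; linarith
lemma soft_mono {n : ℕ} [Nonempty (Fin n)] (ℓ : Fin n → ℝ) {T₁ T₂ : ℝ}
    (h1 : 0 < T₁) (h12 : T₁ ≤ T₂) :
    ∑ k, (Real.exp (-ℓ k / T₁) / ∑ s, Real.exp (-ℓ s / T₁)) * ℓ k ≤
    ∑ k, (Real.exp (-ℓ k / T₂) / ∑ s, Real.exp (-ℓ s / T₂)) * ℓ k := by
  have hZ1 : 0 < ∑ s, Real.exp (-ℓ s / T₁) :=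
    Finset.sum_pos (fun _ _ => Real.exp_pos _) Finset.univ_nonempty
  have hZ2 : 0 < ∑ s, Real.exp (-ℓ s / T₂) :=
    Finset.sum_pos (fun _ _ => Real.exp_pos _) Finset.univ_nonempty
  simp_rw [div_mul_eq_mul_div, ← Finset.sum_div]
  rw [div_le_div_iff₀ hZ1 hZ2]
  exact key_ineq ℓ h1 h12

variable {d : ℕ} {μ : Measure (EuclideanSpace ℝ (Fin d))} [IsFiniteMeasure μ]

lemma integrable_sq_dist (h2 : Integrable (fun y => ‖y‖ ^ 2) μ)
    (c : EuclideanSpace ℝ (Fin d)) :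
    Integrable (fun y => ‖c - y‖ ^ 2) μ := by
  have hmeas : AEStronglyMeasurable (fun y : EuclideanSpace ℝ (Fin d) => ‖c - y‖ ^ 2) μ :=
    (((continuous_const.sub continuous_id).norm.pow 2)).aestronglyMeasurable
  have hdom : Integrable (fun y : EuclideanSpace ℝ (Fin d) => 2 * ‖c‖ ^ 2 + 2 * ‖y‖ ^ 2) μ :=
    (integrable_const _).add (h2.const_mul 2)
  refine hdom.mono hmeas (Filter.Eventually.of_forall fun y => ?_)
  have hb : ‖c - y‖ ≤ ‖c‖ + ‖y‖ := norm_sub_le c y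
  have h0 : (0:ℝ) ≤ ‖c - y‖ := norm_nonneg _
  simp only [Real.norm_eq_abs, abs_of_nonneg (by positivity : (0:ℝ) ≤ ‖c - y‖ ^ 2)]
  rw [abs_of_nonneg (by positivity)]
  nlinarith [pow_le_pow_left₀ h0 hb 2, sq_nonneg (‖c‖ - ‖y‖)]

set_option maxHeartbeats 1000000 in
lemma integrable_soft {n : ℕ} [Nonempty (Fin n)] (h2 : Integrable (fun y => ‖y‖ ^ 2) μ)
    {T : ℝ} (hT : 0 < T) (z : Fin n → EuclideanSpace ℝ (Fin d)) :
    Integrable (fun y => ∑ k,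
      (Real.exp (-‖z k - y‖ ^ 2 / T) / ∑ s, Real.exp (-‖z s - y‖ ^ 2 / T))
        * ‖z k - y‖ ^ 2) μ := by
  have hZ : ∀ y : EuclideanSpace ℝ (Fin d), 0 < ∑ s, Real.exp (-‖z s - y‖ ^ 2 / T) :=
    fun y => Finset.sum_pos (fun _ _ => Real.exp_pos _) Finset.univ_nonempty
  have hcont : Continuous (fun y : EuclideanSpace ℝ (Fin d) => ∑ k,
      (Real.exp (-‖z k - y‖ ^ 2 / T) / ∑ s, Real.exp (-‖z s - y‖ ^ 2 / T))
        * ‖z k - y‖ ^ 2) := by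
    have hc : ∀ c : EuclideanSpace ℝ (Fin d),
        Continuous (fun y : EuclideanSpace ℝ (Fin d) => ‖c - y‖ ^ 2) :=
      fun c => (continuous_const.sub continuous_id).norm.pow 2
    have he : ∀ c : EuclideanSpace ℝ (Fin d),
        Continuous (fun y : EuclideanSpace ℝ (Fin d) => Real.exp (-‖c - y‖ ^ 2 / T)) :=
      fun c => Real.continuous_exp.comp (((hc c).neg).div_const T)
    have hZc : Continuous (fun y : EuclideanSpace ℝ (Fin d) =>
        ∑ s, Real.exp (-‖z s - y‖ ^ 2 / T)) :=
      continuous_finset_sum _ fun s _ => he (z s)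
    exact continuous_finset_sum _ fun k _ =>
      (((he (z k)).div hZc fun y => (hZ y).ne')).mul (hc (z k))
  have hdom : Integrable (fun y => ∑ k, ‖z k - y‖ ^ 2) μ :=
    integrable_finset_sum _ fun k _ => integrable_sq_dist h2 (z k)
  refine hdom.mono hcont.aestronglyMeasurable (Filter.Eventually.of_forall fun y => ?_)
  have hq : ∀ k : Fin n, 0 ≤ Real.exp (-‖z k - y‖ ^ 2 / T) / ∑ s, Real.exp (-‖z s - y‖ ^ 2 / T) ∧
      Real.exp (-‖z k - y‖ ^ 2 / T) / ∑ s, Real.exp (-‖z s - y‖ ^ 2 / T) ≤ 1 := by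
    intro k
    constructor
    · exact div_nonneg (Real.exp_pos _).le (hZ y).le
    · rw [div_le_one (hZ y)]
      exact Finset.single_le_sum (f := fun s => Real.exp (-‖z s - y‖ ^ 2 / T))
        (fun s _ => (Real.exp_pos _).le) (Finset.mem_univ k)
  rw [Real.norm_eq_abs, Real.norm_eq_abs,
    abs_of_nonneg (Finset.sum_nonneg fun k _ => mul_nonneg (hq k).1 (pow_nonneg (norm_nonneg _) 2)),
    abs_of_nonneg (Finset.sum_nonneg fun k _ => pow_nonneg (norm_nonneg _) 2)]
  refine Finset.sum_le_sum fun k _ => ?_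
  calc (Real.exp (-‖z k - y‖ ^ 2 / T) / ∑ s, Real.exp (-‖z s - y‖ ^ 2 / T)) * ‖z k - y‖ ^ 2
      ≤ 1 * ‖z k - y‖ ^ 2 := mul_le_mul_of_nonneg_right (hq k).2 (pow_nonneg (norm_nonneg _) 2)
    _ = ‖z k - y‖ ^ 2 := one_mul _

/-- **The optimal soft distortion is a non-decreasing function of the temperature.**
For a finite measure `μ` on `ℝ^d` with finite second moment and `n ≥ 1`, the map
`T ↦ D*(T) = inf_{z₁,…,zₙ} ∫ ∑ k, q_T(y)(k) ‖z k − y‖² dμ(y)` is non-decreasing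
on `(0, ∞)`, where `q_T(y)` is the Boltzmann distribution of the squared
distances `(‖z k − y‖²)_k` at temperature `T`. -/
theorem optimal_soft_distortion_monotone_in_temperature
    (d n : ℕ) (hn : 1 ≤ n)
    (μ : Measure (EuclideanSpace ℝ (Fin d))) [IsFiniteMeasure μ]
    (h2 : Integrable (fun y => ‖y‖ ^ 2) μ) :
    MonotoneOn
      (fun T : ℝ =>
        ⨅ z : Fin n → EuclideanSpace ℝ (Fin d),
          ∫ y, ∑ k, (Real.exp (-‖z k - y‖ ^ 2 / T) / ∑ s, Real.exp (-‖z s - y‖ ^ 2 / T))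
              * ‖z k - y‖ ^ 2 ∂μ)
      (Set.Ioi 0) := by
  haveI : Nonempty (Fin n) := Fin.pos_iff_nonempty.1 hn
  intro T₁ hT₁ T₂ hT₂ h12
  have h1 : 0 < T₁ := hT₁
  have hT2 : 0 < T₂ := hT₂
  refine ciInf_mono ⟨0, ?_⟩ fun z => ?_
  · rintro x ⟨z, rfl⟩
    exact integral_nonneg fun y => Finset.sum_nonneg fun k _ =>
      mul_nonneg (div_nonneg (Real.exp_pos _).le
        (Finset.sum_nonneg fun s _ => (Real.exp_pos _).le)) (pow_nonneg (norm_nonneg _) 2)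
  · exact integral_mono (integrable_soft h2 h1 z) (integrable_soft h2 hT2 z)
      (fun y => soft_mono (fun k => ‖z k - y‖ ^ 2) h1 h12)
end
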